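/- For every prime p and every positive integer k ≤ p, \(\overline{M}_k(p) = p\,f_k(p) - f_k(1) + \sum_{j=2}^{p} f_k\left(\left\lfloor \frac{p}{j}\right\rfloor\right)\). -/

import Mathlib

open Finset

/-- `fk k m` is the number of `k`-element subsets `A` of `{1, 2, ..., m}` whose elements are
relatively prime, i.e. the gcd of the elements of `A` is `1` (so `fk k m = 0` if `k > m`). -/
def fk (k m : ℕ) : ℕ :=
  ((Finset.Icc 1 m).powerset.filter (fun A => A.card = k ∧ A.gcd _root_.id = 1)).card

/-- `MbarK k n = ∑ ((A) - 1, n)`, summed over all `k`-element subsets `A` of `{1, 2, ..., n}`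
such that the gcd `(A)` of the elements of `A` is relatively prime to `n`. -/
def MbarK (k n : ℕ) : ℕ :=
  ∑ A ∈ (Finset.Icc 1 n).powerset.filter
      (fun A => A.card = k ∧ Nat.gcd (A.gcd _root_.id) n = 1),
    Nat.gcd (A.gcd _root_.id - 1) n

lemma gcd_mul_right_finset (B : Finset ℕ) (j : ℕ) :
    B.gcd (fun b => b * j) = B.gcd _root_.id * j := by
  induction B using Finset.induction with
  | empty => simp
  | insert _ _ _ ih => simp [Finset.gcd_insert, ih, Nat.gcd_mul_right]

lemma card_gcd_eq (p k j : ℕ) (hj : 1 ≤ j) :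
    ((Finset.Icc 1 p).powerset.filter (fun A => A.card = k ∧ A.gcd _root_.id = j)).card
      = fk k (p / j) := by
  have hj0 : 0 < j := hj
  unfold fk
  have key : ∀ B : Finset ℕ, (B.image (· * j)).gcd _root_.id = B.gcd _root_.id * j := by
    intro B
    rw [Finset.gcd_image]
    exact gcd_mul_right_finset B j
  apply Finset.card_nbij' (fun A => A.image (· / j)) (fun B => B.image (· * j))
  · intro A hA
    simp only [Finset.mem_coe, Finset.mem_filter, Finset.mem_powerset] at hA ⊢
    obtain ⟨hsub, hcard, hgcd⟩ := hA
    have hdvd : ∀ a ∈ A, j ∣ a := fun a ha => hgcd ▸ Finset.gcd_dvd ha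
    have hback : (A.image (· / j)).image (· * j) = A := by
      rw [Finset.image_image]
      have h1 : ∀ a ∈ A, ((· * j) ∘ (· / j)) a = _root_.id a := by
        intro a ha
        simp [Nat.div_mul_cancel (hdvd a ha)]
      rw [Finset.image_congr h1, Finset.image_id]
    refine ⟨?_, ?_, ?_⟩
    · intro b hb
      simp only [Finset.mem_image] at hb
      obtain ⟨a, ha, rfl⟩ := hb
      have ha' := hsub ha
      simp only [Finset.mem_Icc] at ha' ⊢
      constructor
      · rw [Nat.one_le_div_iff hj0]
        exact Nat.le_of_dvd (lt_of_lt_of_le one_pos ha'.1) (hdvd a ha)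
      · exact Nat.div_le_div_right ha'.2
    · rw [← hcard]
      apply Finset.card_image_of_injOn
      intro a ha b hb hab
      have h2 : a / j * j = b / j * j := congrArg (· * j) hab
      rwa [Nat.div_mul_cancel (hdvd a ha), Nat.div_mul_cancel (hdvd b hb)] at h2
    · have h3 := key (A.image (· / j))
      rw [hback, hgcd] at h3
      exact Nat.eq_of_mul_eq_mul_right hj0 (by rw [one_mul]; exact h3.symm)
  · intro B hB
    simp only [Finset.mem_coe, Finset.mem_filter, Finset.mem_powerset] at hB ⊢
    obtain ⟨hsub, hcard, hgcd⟩ := hB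
    refine ⟨?_, ?_, ?_⟩
    · intro a ha
      simp only [Finset.mem_image] at ha
      obtain ⟨b, hb, rfl⟩ := ha
      have hb' := hsub hb
      simp only [Finset.mem_Icc] at hb' ⊢
      have hbpos : 0 < b := hb'.1
      constructor
      · calc 1 ≤ j := hj
          _ ≤ b * j := Nat.le_mul_of_pos_left j hbpos
      · calc b * j ≤ (p / j) * j := Nat.mul_le_mul_right j hb'.2
          _ ≤ p := Nat.div_mul_le_self p j
    · rw [← hcard]
      exact Finset.card_image_of_injective _ (fun a b h => Nat.eq_of_mul_eq_mul_right hj0 h)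
    · rw [key, hgcd, one_mul]
  · intro A hA
    simp only [Finset.mem_coe, Finset.mem_filter, Finset.mem_powerset] at hA
    obtain ⟨hsub, hcard, hgcd⟩ := hA
    have hdvd : ∀ a ∈ A, j ∣ a := fun a ha => hgcd ▸ Finset.gcd_dvd ha
    show (A.image (· / j)).image (· * j) = A
    rw [Finset.image_image]
    have h1 : ∀ a ∈ A, ((· * j) ∘ (· / j)) a = _root_.id a := by
      intro a ha
      simp [Nat.div_mul_cancel (hdvd a ha)]
    rw [Finset.image_congr h1, Finset.image_id]
  · intro B hB
    show (B.image (· * j)).image (· / j) = B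
    rw [Finset.image_image]
    have h1 : ∀ b ∈ B, ((· / j) ∘ (· * j)) b = _root_.id b := by
      intro b hb
      simp [Nat.mul_div_cancel _ hj0]
    rw [Finset.image_congr h1, Finset.image_id]

theorem MbarK_prime (p k : ℕ) (hp : p.Prime) (hk : 0 < k) (hkp : k ≤ p) :
    (MbarK k p : ℤ) = (p : ℤ) * (fk k p : ℤ) - (fk k 1 : ℤ)
      + ∑ j ∈ Finset.Icc 2 p, (fk k (p / j) : ℤ) := by
  have hp2 : 2 ≤ p := hp.two_le
  set S : ℕ → Finset (Finset ℕ) := fun j =>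
    (Finset.Icc 1 p).powerset.filter (fun A => A.card = k ∧ A.gcd _root_.id = j) with hS
  -- rewrite MbarK's filter via gcd values in [1, p-1]
  have hMfilter : (Finset.Icc 1 p).powerset.filter
      (fun A => A.card = k ∧ Nat.gcd (A.gcd _root_.id) p = 1)
      = (Finset.Icc 1 p).powerset.filter
        (fun A => A.card = k ∧ A.gcd _root_.id ∈ Finset.Icc 1 (p-1)) := by
    apply Finset.filter_congr
    intro A hA
    simp only [Finset.mem_powerset] at hA
    constructor
    · rintro ⟨hcard, hcop⟩
      refine ⟨hcard, ?_⟩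
      have hne : A.Nonempty := Finset.card_pos.mp (hcard ▸ hk)
      obtain ⟨a, ha⟩ := hne
      have ha' := hA ha
      simp only [Finset.mem_Icc] at ha'
      have hdvd : A.gcd _root_.id ∣ a := Finset.gcd_dvd ha
      have hapos : 0 < a := ha'.1
      have hpos : 0 < A.gcd _root_.id := Nat.pos_of_dvd_of_pos hdvd hapos
      have hle : A.gcd _root_.id ≤ p := le_trans (Nat.le_of_dvd hapos hdvd) ha'.2
      have hne' : A.gcd _root_.id ≠ p := by
        intro h
        rw [h, Nat.gcd_self] at hcop
        omega
      simp only [Finset.mem_Icc]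
      omega
    · rintro ⟨hcard, hmem⟩
      refine ⟨hcard, ?_⟩
      simp only [Finset.mem_Icc] at hmem
      have hnd : ¬ p ∣ A.gcd _root_.id := by
        intro h
        have := Nat.le_of_dvd (by omega) h
        omega
      exact Nat.coprime_comm.mp ((hp.coprime_iff_not_dvd).mpr hnd)
  have hM : MbarK k p = p * (S 1).card + ∑ j ∈ Finset.Icc 2 (p-1), (S j).card := by
    have hfib := Finset.sum_fiberwise_of_maps_to
      (s := (Finset.Icc 1 p).powerset.filter
        (fun A => A.card = k ∧ A.gcd _root_.id ∈ Finset.Icc 1 (p-1)))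
      (t := Finset.Icc 1 (p-1)) (g := fun A => A.gcd _root_.id)
      (fun A hA => (Finset.mem_filter.mp hA).2.2)
      (fun A => Nat.gcd (A.gcd _root_.id - 1) p)
    rw [MbarK, hMfilter, ← hfib]
    have hinner : ∀ j ∈ Finset.Icc 1 (p-1),
        (∑ A ∈ ((Finset.Icc 1 p).powerset.filter
            (fun A => A.card = k ∧ A.gcd _root_.id ∈ Finset.Icc 1 (p-1))).filter
            (fun A => A.gcd _root_.id = j), Nat.gcd (A.gcd _root_.id - 1) p)
          = (S j).card * Nat.gcd (j-1) p := by
      intro j hj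
      rw [Finset.filter_filter]
      have hfe : (Finset.Icc 1 p).powerset.filter
          (fun A => (A.card = k ∧ A.gcd _root_.id ∈ Finset.Icc 1 (p-1)) ∧ A.gcd _root_.id = j)
          = S j := by
        apply Finset.filter_congr
        intro A _
        constructor
        · rintro ⟨⟨h1, _⟩, h3⟩; exact ⟨h1, h3⟩
        · rintro ⟨h1, h2⟩; exact ⟨⟨h1, h2 ▸ hj⟩, h2⟩
      rw [hfe, Finset.sum_congr rfl (fun A hA => by
        rw [(Finset.mem_filter.mp hA).2.2] : ∀ A ∈ S j, Nat.gcd (A.gcd _root_.id - 1) p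
          = Nat.gcd (j - 1) p)]
      simp [Finset.sum_const, mul_comm]
    rw [Finset.sum_congr rfl hinner]
    have hins : Finset.Icc 1 (p-1) = insert 1 (Finset.Icc 2 (p-1)) := by
      ext x
      simp only [Finset.mem_Icc, Finset.mem_insert]
      omega
    rw [hins, Finset.sum_insert (by simp [Finset.mem_Icc])]
    have hone : ∀ j ∈ Finset.Icc 2 (p-1), (S j).card * Nat.gcd (j-1) p = (S j).card := by
      intro j hj
      simp only [Finset.mem_Icc] at hj
      have hnd : ¬ p ∣ (j - 1) := by
        intro h
        have := Nat.le_of_dvd (by omega) h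
        omega
      have : Nat.gcd (j - 1) p = 1 :=
        Nat.coprime_comm.mp ((hp.coprime_iff_not_dvd).mpr hnd)
      rw [this, mul_one]
    rw [Finset.sum_congr rfl hone]
    simp [Nat.gcd_zero_left, mul_comm]
  -- split the sum over Icc 2 p
  have hsplit : ∑ j ∈ Finset.Icc 2 p, (S j).card
      = (∑ j ∈ Finset.Icc 2 (p-1), (S j).card) + (S p).card := by
    have : p = (p - 1) + 1 := by omega
    rw [this, Finset.sum_Icc_succ_top (by omega), ← this]
  -- translate S-cards into fk values
  have e1 : (S 1).card = fk k p := by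
    have := card_gcd_eq p k 1 le_rfl
    rwa [Nat.div_one] at this
  have e2 : (S p).card = fk k 1 := by
    have := card_gcd_eq p k p (by omega)
    rwa [Nat.div_self (by omega : 0 < p)] at this
  have e3 : ∑ j ∈ Finset.Icc 2 p, ((fk k (p / j) : ℤ))
      = ∑ j ∈ Finset.Icc 2 p, ((S j).card : ℤ) := by
    apply Finset.sum_congr rfl
    intro j hj
    simp only [Finset.mem_Icc] at hj
    rw [card_gcd_eq p k j (by omega)]
  have hMZ : (MbarK k p : ℤ) = p * ((S 1).card : ℤ)
      + ∑ j ∈ Finset.Icc 2 (p-1), ((S j).card : ℤ) := by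
    exact_mod_cast congrArg (Nat.cast : ℕ → ℤ) hM
  have hsplitZ : ∑ j ∈ Finset.Icc 2 p, ((S j).card : ℤ)
      = (∑ j ∈ Finset.Icc 2 (p-1), ((S j).card : ℤ)) + ((S p).card : ℤ) := by
    exact_mod_cast congrArg (Nat.cast : ℕ → ℤ) hsplit
  rw [e3, hMZ, e1, e2] at *
  linarith [hsplitZ]
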